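/- arXiv:2605.06479 — 3 statements merged into one kernel-verified Lean document; each statement's English description precedes it below -/
import Mathlib

section
/- Let N ≥ 1 and let δ₁ < δ₂ < ⋯ be N distinct reals with ranks R_i ∈ {1,…,N} for data points i ∈ {1,…,N}, and let W_i ∈ {−1,0,1}. For thresholds equal to order statistics δ_(ĵ) and δ_(ĵ_{−i}) with |ĵ_{−i} − ĵ| ≤ K for all i, define L_i(j) = I_{s,i} + W_i·1{R_i < j} for values I_{s,i} ∈ {0,1}. Then (1/N)·Σ_{i=1}^N |L_i(ĵ_{−i}) − L_i(ĵ)| ≤ 2K/N. -/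
open Finset

/-- Rank-stability bound: with distinct ranks `R_i`, losses
`L_i(j) = I_{s,i} + W_i·1{R_i < j}`, and leave-one-out selected ranks `ĵ_{−i}`
satisfying `|ĵ_{−i} − ĵ| ≤ K`, one has
`(1/N)·Σ_i |L_i(ĵ_{−i}) − L_i(ĵ)| ≤ 2K/N`. -/
theorem stmt2 (N : ℕ) (hN : 1 ≤ N)
    (R : ℕ → ℕ) (hRmem : ∀ i ∈ Finset.Icc 1 N, R i ∈ Finset.Icc 1 N)
    (hRinj : ∀ i ∈ Finset.Icc 1 N, ∀ i' ∈ Finset.Icc 1 N, R i = R i' → i = i')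
    (W : ℕ → ℝ) (hW : ∀ i, W i = -1 ∨ W i = 0 ∨ W i = 1)
    (Is : ℕ → ℝ) (hIs : ∀ i, Is i = 0 ∨ Is i = 1)
    (L : ℕ → ℕ → ℝ)
    (hL : ∀ i j, L i j = Is i + W i * (if R i < j then (1:ℝ) else 0))
    (jhat : ℕ) (jhatLOO : ℕ → ℕ) (K : ℕ)
    (hK : ∀ i ∈ Finset.Icc 1 N, |(jhatLOO i : ℤ) - (jhat : ℤ)| ≤ (K : ℤ)) :
    (1 / (N : ℝ)) * ∑ i ∈ Finset.Icc 1 N, |L i (jhatLOO i) - L i jhat|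
      ≤ 2 * (K : ℝ) / (N : ℝ) := by
  have hNpos : (0:ℝ) < N := by exact_mod_cast hN
  set S : Finset ℕ := Finset.Ico (jhat - K) (jhat + K) with hS
  have hbound : ∀ i ∈ Finset.Icc 1 N,
      |L i (jhatLOO i) - L i jhat| ≤ (if R i ∈ S then (1:ℝ) else 0) := by
    intro i hi
    rw [hL, hL]
    have habs : |W i| ≤ 1 := by rcases hW i with h | h | h <;> simp [h]
    by_cases hmem : R i ∈ S
    · simp only [hmem, if_pos]
      have h1 : |Is i + W i * (if R i < jhatLOO i then (1:ℝ) else 0)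
          - (Is i + W i * (if R i < jhat then (1:ℝ) else 0))| =
          |W i| * |(if R i < jhatLOO i then (1:ℝ) else 0)
            - (if R i < jhat then (1:ℝ) else 0)| := by
        rw [← abs_mul]; ring_nf
      rw [h1]
      have h2 : |(if R i < jhatLOO i then (1:ℝ) else 0)
          - (if R i < jhat then (1:ℝ) else 0)| ≤ 1 := by
        split_ifs <;> norm_num
      calc |W i| * |(if R i < jhatLOO i then (1:ℝ) else 0)
            - (if R i < jhat then (1:ℝ) else 0)| ≤ 1 * 1 :=
          mul_le_mul habs h2 (abs_nonneg _) zero_le_one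
        _ = 1 := by ring
    · -- R i ∉ S: the two indicators agree
      have hKi := hK i hi
      obtain ⟨hlo', hhi'⟩ := abs_le.mp hKi
      have hlo : (jhat : ℤ) - K ≤ jhatLOO i := by omega
      have hhi : (jhatLOO i : ℤ) ≤ jhat + K := by omega
      have : (if R i < jhatLOO i then (1:ℝ) else 0)
          = (if R i < jhat then (1:ℝ) else 0) := by
        simp only [hS, Finset.mem_Ico, not_and_or, not_lt, not_le] at hmem
        rcases hmem with h | h
        · -- R i < jhat - K, so R i < both
          have h1 : R i < jhat := by omega
          have h2 : R i < jhatLOO i := by omega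
          simp [h1, h2]
        · -- jhat + K ≤ R i, so R i ≥ both
          have h1 : ¬ R i < jhat := by omega
          have h2 : ¬ R i < jhatLOO i := by omega
          simp [h1, h2]
      rw [this]
      simp [hmem]
  have hsum : ∑ i ∈ Finset.Icc 1 N, |L i (jhatLOO i) - L i jhat|
      ≤ ∑ i ∈ Finset.Icc 1 N, (if R i ∈ S then (1:ℝ) else 0) :=
    Finset.sum_le_sum hbound
  have hcard : ∑ i ∈ Finset.Icc 1 N, (if R i ∈ S then (1:ℝ) else 0)
      = ((Finset.Icc 1 N).filter (fun i => R i ∈ S)).card := by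
    rw [Finset.sum_boole]
  have hcard2 : ((Finset.Icc 1 N).filter (fun i => R i ∈ S)).card ≤ S.card := by
    apply Finset.card_le_card_of_injOn R
    · intro i hi
      exact (Finset.mem_filter.mp hi).2
    · intro a ha b hb hab
      exact hRinj a (Finset.mem_filter.mp ha).1 b (Finset.mem_filter.mp hb).1 hab
  have hScard : S.card ≤ 2 * K := by
    rw [hS, Nat.card_Ico]; omega
  have hfinal : ∑ i ∈ Finset.Icc 1 N, |L i (jhatLOO i) - L i jhat| ≤ 2 * (K:ℝ) := by
    calc ∑ i ∈ Finset.Icc 1 N, |L i (jhatLOO i) - L i jhat|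
        ≤ ((Finset.Icc 1 N).filter (fun i => R i ∈ S)).card := by rw [← hcard]; exact hsum
      _ ≤ (S.card : ℝ) := by exact_mod_cast hcard2
      _ ≤ 2 * (K:ℝ) := by exact_mod_cast hScard
  calc (1 / (N : ℝ)) * ∑ i ∈ Finset.Icc 1 N, |L i (jhatLOO i) - L i jhat|
      ≤ (1 / (N : ℝ)) * (2 * (K:ℝ)) :=
        mul_le_mul_of_nonneg_left hfinal (by positivity)
    _ = 2 * (K:ℝ) / (N:ℝ) := by ring
end

section
/- Let (S_t)_{t=1}^n be independent with S_t ∈ [−1,1] a.s. and E[S_t] ≥ g⋆ > 0 for t ≥ i₀ + 1, where i₀ ∈ {0,…,n−1} and n ≥ 2. For b ≥ 0 define N^{(b)}(n) = max{L ∈ {1,…,n} : ∃ s ∈ {i₀,…,n−L} with Σ_{t=s+1}^{s+L} S_t ≤ b}. Then E[N^{(b)}(n)] ≤ (16/g⋆²)·log n + 2b/g⋆ + 2. -/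
open MeasureTheory ProbabilityTheory Finset
open scoped ENNReal

-- convexity lemma
lemma aux_exp_le_chord {u x : ℝ} (hx1 : -1 ≤ x) (hx2 : x ≤ 1) :
    Real.exp (-u * x) ≤ Real.cosh u - x * Real.sinh u := by
  have ha : (0:ℝ) ≤ (1 + x) / 2 := by linarith
  have hb : (0:ℝ) ≤ (1 - x) / 2 := by linarith
  have hab : (1 + x) / 2 + (1 - x) / 2 = (1:ℝ) := by ring
  have h := convexOn_exp.2 (Set.mem_univ (-u)) (Set.mem_univ u) ha hb hab
  simp only [smul_eq_mul] at h
  have he : (1 + x) / 2 * (-u) + (1 - x) / 2 * u = -u * x := by ring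
  rw [he] at h
  refine h.trans_eq ?_
  rw [Real.cosh_eq, Real.sinh_eq]
  ring

-- analytic inequality
lemma aux_rho {g : ℝ} (hg : 0 < g) (hg1 : g ≤ 1) :
    Real.cosh (g / 2) - g * Real.sinh (g / 2) ≤ Real.exp (-(g ^ 2 / 4)) := by
  have hs : g / 2 ≤ Real.sinh (g / 2) := Real.self_le_sinh_iff.2 (by linarith)
  have hc : Real.cosh (g / 2) ≤ Real.exp ((g / 2) ^ 2 / 2) := Real.cosh_le_exp_half_sq _
  set s := g ^ 2 with hsdef
  have hs0 : 0 < s := by positivity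
  have hs1 : s ≤ 1 := by nlinarith
  have h1 : Real.exp (s / 8) ≤ 1 + s / 7 := by
    have h2 : 1 - s / 8 ≤ Real.exp (-(s / 8)) := by
      have := Real.add_one_le_exp (-(s / 8)); linarith
    have h3 : Real.exp (s / 8) * Real.exp (-(s / 8)) = 1 := by
      rw [← Real.exp_add]; norm_num
    nlinarith [Real.exp_pos (s / 8), Real.exp_pos (-(s / 8))]
  have h4 : 1 - s / 4 ≤ Real.exp (-(s / 4)) := by
    have := Real.add_one_le_exp (-(s / 4)); linarith
  have he : (g / 2) ^ 2 / 2 = s / 8 := by rw [hsdef]; ring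
  have hgs : g * (g / 2) = s / 2 := by rw [hsdef]; ring
  calc Real.cosh (g / 2) - g * Real.sinh (g / 2)
      ≤ Real.exp (s / 8) - g * (g / 2) := by
        rw [← he]; nlinarith
    _ ≤ Real.exp (-(s / 4)) := by rw [hgs]; linarith
    _ = Real.exp (-(g ^ 2 / 4)) := by rw [hsdef]

lemma aux_int_exp {Ω : Type*} [MeasurableSpace Ω] (μ : Measure Ω) [IsProbabilityMeasure μ]
    (X : Ω → ℝ) (hm : Measurable X) (hbdd : ∀ᵐ ω ∂μ, X ω ∈ Set.Icc (-1 : ℝ) 1) (c : ℝ) :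
    Integrable (fun ω => Real.exp (c * X ω)) μ := by
  refine (integrable_const (Real.exp |c|)).mono' ((hm.const_mul c).exp.aestronglyMeasurable) ?_
  filter_upwards [hbdd] with ω hω
  rw [Real.norm_eq_abs, Real.abs_exp, Real.exp_le_exp]
  calc c * X ω ≤ |c * X ω| := le_abs_self _
    _ = |c| * |X ω| := abs_mul _ _
    _ ≤ |c| * 1 := by
        have : |X ω| ≤ 1 := abs_le.2 ⟨hω.1, hω.2⟩
        nlinarith [abs_nonneg c]
    _ = |c| := mul_one _

lemma aux_mgf_le {Ω : Type*} [MeasurableSpace Ω] (μ : Measure Ω) [IsProbabilityMeasure μ]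
    (X : Ω → ℝ) (hm : Measurable X) (hbdd : ∀ᵐ ω ∂μ, X ω ∈ Set.Icc (-1 : ℝ) 1)
    {g : ℝ} (hg : 0 < g) (hg1 : g ≤ 1) (hdrift : g ≤ ∫ ω, X ω ∂μ) :
    mgf X μ (-(g / 2)) ≤ Real.exp (-(g ^ 2 / 4)) := by
  have hX_int : Integrable X μ := by
    refine (integrable_const (1 : ℝ)).mono' hm.aestronglyMeasurable ?_
    filter_upwards [hbdd] with ω hω
    rw [Real.norm_eq_abs]
    simpa using abs_le.2 ⟨hω.1, hω.2⟩
  have h1 : mgf X μ (-(g / 2)) ≤ ∫ ω, (Real.cosh (g / 2) - X ω * Real.sinh (g / 2)) ∂μ := by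
    refine integral_mono_ae (aux_int_exp μ X hm hbdd _)
      ((integrable_const _).sub (hX_int.mul_const _)) ?_
    filter_upwards [hbdd] with ω hω
    have := aux_exp_le_chord (u := g / 2) hω.1 hω.2
    simpa [neg_mul] using this
  have h2 : ∫ ω, (Real.cosh (g / 2) - X ω * Real.sinh (g / 2)) ∂μ
      = Real.cosh (g / 2) - (∫ ω, X ω ∂μ) * Real.sinh (g / 2) := by
    rw [integral_sub (integrable_const _) (hX_int.mul_const _), integral_const,
      integral_mul_const, probReal_univ, smul_eq_mul, one_mul]
  have h3 : Real.cosh (g / 2) - (∫ ω, X ω ∂μ) * Real.sinh (g / 2)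
      ≤ Real.cosh (g / 2) - g * Real.sinh (g / 2) := by
    have hsinh : 0 ≤ Real.sinh (g / 2) := by have := Real.self_le_sinh_iff (x := g/2) |>.2 (by linarith); linarith
    nlinarith
  calc mgf X μ (-(g / 2)) ≤ _ := h1
    _ = _ := h2
    _ ≤ _ := h3
    _ ≤ _ := aux_rho hg hg1

lemma aux_block {Ω : Type*} [MeasurableSpace Ω] (μ : Measure Ω) [IsProbabilityMeasure μ]
    (S : ℕ → Ω → ℝ) (hmeas : ∀ t, Measurable (S t))
    (hindep : iIndepFun S μ)
    (hbdd : ∀ t, ∀ᵐ ω ∂μ, S t ω ∈ Set.Icc (-1 : ℝ) 1)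
    {g b : ℝ} (hg : 0 < g) (hg1 : g ≤ 1)
    (i₀ : ℕ) (hdrift : ∀ t, i₀ + 1 ≤ t → g ≤ ∫ ω, S t ω ∂μ)
    (L s : ℕ) (hs : i₀ ≤ s) :
    (μ {ω | ∑ t ∈ Finset.Icc (s + 1) (s + L), S t ω ≤ b}).toReal
      ≤ Real.exp (g * b / 2 - g ^ 2 * L / 4) := by
  set F := Finset.Icc (s + 1) (s + L) with hF
  have hint : Integrable (fun ω => Real.exp (-(g / 2) * (∑ t ∈ F, S t) ω)) μ :=
    hindep.integrable_exp_mul_sum hmeas (fun i _ => aux_int_exp μ (S i) (hmeas i) (hbdd i) _)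
  have hset : {ω | ∑ t ∈ F, S t ω ≤ b} = {ω | (∑ t ∈ F, S t) ω ≤ b} := by
    simp [Finset.sum_apply]
  have hch := measure_le_le_exp_mul_mgf (μ := μ) (X := ∑ t ∈ F, S t) b
    (t := -(g / 2)) (by linarith) hint
  rw [hset]
  refine hch.trans ?_
  have hprod : mgf (∑ t ∈ F, S t) μ (-(g / 2)) = ∏ t ∈ F, mgf (S t) μ (-(g / 2)) :=
    hindep.mgf_sum hmeas F
  have hcard : F.card = L := by rw [hF, Nat.card_Icc]; omega
  have hple : ∏ t ∈ F, mgf (S t) μ (-(g / 2)) ≤ Real.exp (-(g ^ 2 / 4)) ^ L := by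
    rw [← hcard, ← Finset.prod_const]
    refine Finset.prod_le_prod (fun t _ => mgf_nonneg) (fun t ht => ?_)
    have hti : i₀ + 1 ≤ t := by
      have := (Finset.mem_Icc.1 ht).1; omega
    exact aux_mgf_le μ (S t) (hmeas t) (hbdd t) hg hg1 (hdrift t hti)
  calc Real.exp (-(-(g / 2)) * b) * mgf (∑ t ∈ F, S t) μ (-(g / 2))
      ≤ Real.exp (-(-(g / 2)) * b) * (Real.exp (-(g ^ 2 / 4)) ^ L) := by
        rw [hprod]; exact mul_le_mul_of_nonneg_left hple (Real.exp_pos _).le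
    _ = Real.exp (g * b / 2 - g ^ 2 * L / 4) := by
        rw [← Real.exp_nat_mul, ← Real.exp_add]
        congr 1; ring

lemma aux_meas_sup {Ω : Type*} [MeasurableSpace Ω] (s : Finset ℕ) (f : ℕ → Ω → ℕ)
    (hf : ∀ i, Measurable (f i)) : Measurable fun ω => s.sup fun i => f i ω := by
  classical
  induction s using Finset.induction_on with
  | empty => simp only [Finset.sup_empty]; exact measurable_const
  | insert _ _ hi ih => simp only [Finset.sup_insert]; exact Measurable.sup (hf _) ih

/-- Suffix low-sum block bound: with independent `S_t ∈ [−1,1]` and drift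
`E[S_t] ≥ g⋆ > 0` for `t ≥ i₀+1`, the longest contiguous block starting after `i₀`
with sum at most `b` has expected length at most `(16/g⋆²)·log n + 2b/g⋆ + 2`. -/
theorem stmt6 {Ω : Type*} [MeasurableSpace Ω] (μ : Measure Ω) [IsProbabilityMeasure μ]
    (n : ℕ) (hn : 2 ≤ n) (S : ℕ → Ω → ℝ) (hmeas : ∀ t, Measurable (S t))
    (hindep : iIndepFun S μ)
    (hbdd : ∀ t, ∀ᵐ ω ∂μ, S t ω ∈ Set.Icc (-1 : ℝ) 1)
    (i₀ : ℕ) (hi₀ : i₀ ≤ n - 1)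
    (gstar : ℝ) (hgstar : 0 < gstar)
    (hdrift : ∀ t, i₀ + 1 ≤ t → gstar ≤ ∫ ω, S t ω ∂μ)
    (b : ℝ) (hb : 0 ≤ b)
    (Nb : Ω → ℕ)
    (hNb : ∀ ω, Nb ω = sSup {L : ℕ | L ∈ Finset.Icc 1 n ∧
      ∃ s ∈ Finset.Icc i₀ (n - L), ∑ t ∈ Finset.Icc (s + 1) (s + L), S t ω ≤ b}) :
    ∫ ω, (Nb ω : ℝ) ∂μ ≤ (16 / gstar ^ 2) * Real.log n + 2 * b / gstar + 2 := by
  classical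
  have hn1R : (1:ℝ) ≤ (n:ℝ) := by exact_mod_cast Nat.one_le_of_lt hn
  have hnpos : (0:ℝ) < (n:ℝ) := lt_of_lt_of_le one_pos hn1R
  have hlog : 0 ≤ Real.log n := Real.log_nonneg hn1R
  -- gstar ≤ 1
  have hg1 : gstar ≤ 1 := by
    have hint : Integrable (S (i₀ + 1)) μ := by
      refine (integrable_const (1 : ℝ)).mono' (hmeas _).aestronglyMeasurable ?_
      filter_upwards [hbdd (i₀ + 1)] with ω hω
      rw [Real.norm_eq_abs]
      simpa using abs_le.2 ⟨hω.1, hω.2⟩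
    have h2 : ∫ ω, S (i₀ + 1) ω ∂μ ≤ ∫ _ω, (1:ℝ) ∂μ :=
      integral_mono_ae hint (integrable_const _) ((hbdd _).mono fun ω h => h.2)
    have h3 : ∫ _ω, (1:ℝ) ∂μ = 1 := by simp
    exact (hdrift _ le_rfl).trans (h2.trans_eq h3)
  set c : ℝ := 12 / gstar ^ 2 * Real.log n + 2 * b / gstar with hc
  have hc0 : 0 ≤ c := by positivity
  set L₀ : ℕ := ⌈c⌉₊ with hL0
  set P : ℕ → Ω → Prop :=
    fun L ω => ∃ s ∈ Finset.Icc i₀ (n - L), ∑ t ∈ Finset.Icc (s + 1) (s + L), S t ω ≤ b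
    with hP
  set A : ℕ → ℕ → Set Ω :=
    fun L s => {ω | ∑ t ∈ Finset.Icc (s + 1) (s + L), S t ω ≤ b} with hA
  have hAmeas : ∀ L s, MeasurableSet (A L s) := fun L s =>
    measurableSet_le (Finset.measurable_sum _ (fun t _ => hmeas t)) measurable_const
  have hPmeas : ∀ L, MeasurableSet {ω | P L ω} := by
    intro L
    have : {ω | P L ω} = ⋃ s ∈ Finset.Icc i₀ (n - L), A L s := by
      ext ω; simp [hP, hA]
    rw [this]
    exact (Finset.Icc i₀ (n - L)).measurableSet_biUnion (fun s _ => hAmeas L s)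
  set E : Set Ω := ⋃ L ∈ Finset.Icc (L₀ + 1) n, ⋃ s ∈ Finset.Icc i₀ (n - L), A L s with hE
  have hEmeas : MeasurableSet E :=
    (Finset.Icc (L₀ + 1) n).measurableSet_biUnion (fun L _ =>
      (Finset.Icc i₀ (n - L)).measurableSet_biUnion (fun s _ => hAmeas L s))
  -- per-event bound
  have hq : ∀ L s, L₀ + 1 ≤ L → i₀ ≤ s →
      μ (A L s) ≤ ENNReal.ofReal (((n:ℝ) ^ 3)⁻¹) := by
    intro L s hL hs
    have h1 := aux_block μ S hmeas hindep hbdd hgstar hg1 i₀ hdrift L s hs (b := b)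
    have hLc : c ≤ (L:ℝ) := by
      refine (Nat.le_ceil c).trans ?_
      exact_mod_cast Nat.le_of_succ_le hL
    have h2 : Real.exp (gstar * b / 2 - gstar ^ 2 * L / 4) ≤ ((n:ℝ) ^ 3)⁻¹ := by
      have hgc : gstar ^ 2 / 4 * c = 3 * Real.log n + gstar * b / 2 := by
        rw [hc]; field_simp; ring
      have hmul : gstar ^ 2 / 4 * c ≤ gstar ^ 2 / 4 * L :=
        mul_le_mul_of_nonneg_left hLc (by positivity)
      have harg : gstar * b / 2 - gstar ^ 2 * L / 4 ≤ -(3 * Real.log n) := by nlinarith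
      calc Real.exp (gstar * b / 2 - gstar ^ 2 * L / 4)
          ≤ Real.exp (-(3 * Real.log n)) := Real.exp_le_exp.2 harg
        _ = ((n:ℝ) ^ 3)⁻¹ := by
            rw [Real.exp_neg]
            congr 1
            rw [show (3:ℝ) * Real.log n = Real.log n * 3 by ring]
            rw [← Real.rpow_natCast (n:ℝ) 3]
            rw [← Real.exp_log (x := (n:ℝ)) hnpos]
            rw [← Real.exp_mul]
            norm_num
    calc μ (A L s) = ENNReal.ofReal ((μ (A L s)).toReal) :=
          (ENNReal.ofReal_toReal (measure_ne_top μ _)).symm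
      _ ≤ ENNReal.ofReal (((n:ℝ) ^ 3)⁻¹) := ENNReal.ofReal_le_ofReal (h1.trans h2)
  -- union bound
  have hEb : μ E ≤ ENNReal.ofReal ((n:ℝ)⁻¹) := by
    calc μ E ≤ ∑ L ∈ Finset.Icc (L₀ + 1) n, μ (⋃ s ∈ Finset.Icc i₀ (n - L), A L s) :=
          measure_biUnion_finset_le _ _
      _ ≤ ∑ L ∈ Finset.Icc (L₀ + 1) n, ∑ s ∈ Finset.Icc i₀ (n - L), μ (A L s) :=
          Finset.sum_le_sum fun L _ => measure_biUnion_finset_le _ _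
      _ ≤ ∑ L ∈ Finset.Icc (L₀ + 1) n, (n : ℝ≥0∞) * ENNReal.ofReal (((n:ℝ) ^ 3)⁻¹) := by
          refine Finset.sum_le_sum fun L hL => ?_
          have hcard : ((Finset.Icc i₀ (n - L)).card : ℝ≥0∞) ≤ (n : ℝ≥0∞) := by
            have h5 : (Finset.Icc i₀ (n - L)).card ≤ n := by
              rw [Nat.card_Icc]
              have : 1 ≤ L := le_trans (Nat.le_add_left 1 L₀) (Finset.mem_Icc.1 hL).1
              omega
            exact_mod_cast h5
          calc ∑ s ∈ Finset.Icc i₀ (n - L), μ (A L s)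
              ≤ ∑ _s ∈ Finset.Icc i₀ (n - L), ENNReal.ofReal (((n:ℝ) ^ 3)⁻¹) := by
                refine Finset.sum_le_sum fun s hs => ?_
                exact hq L s (Finset.mem_Icc.1 hL).1 (Finset.mem_Icc.1 hs).1
            _ = ((Finset.Icc i₀ (n - L)).card : ℝ≥0∞) * ENNReal.ofReal (((n:ℝ) ^ 3)⁻¹) := by
                rw [Finset.sum_const, nsmul_eq_mul]
            _ ≤ (n : ℝ≥0∞) * ENNReal.ofReal (((n:ℝ) ^ 3)⁻¹) :=
                mul_le_mul_left hcard _
      _ ≤ (n : ℝ≥0∞) * ((n : ℝ≥0∞) * ENNReal.ofReal (((n:ℝ) ^ 3)⁻¹)) := by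
          rw [Finset.sum_const, nsmul_eq_mul]
          refine mul_le_mul_left ?_ _
          have h6 : (Finset.Icc (L₀ + 1) n).card ≤ n := by rw [Nat.card_Icc]; omega
          exact_mod_cast h6
      _ = ENNReal.ofReal ((n:ℝ)⁻¹) := by
          rw [show ((n : ℝ≥0∞)) = ENNReal.ofReal ((n:ℝ)) by simp,
            ← ENNReal.ofReal_mul hnpos.le, ← ENNReal.ofReal_mul hnpos.le]
          congr 1
          field_simp
  -- structure of Nb
  have hbddT : ∀ ω, BddAbove {L : ℕ | L ∈ Finset.Icc 1 n ∧ P L ω} :=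
    fun ω => ⟨n, fun L hL => (Finset.mem_Icc.1 hL.1).2⟩
  have hNb_le_n : ∀ ω, Nb ω ≤ n := by
    intro ω
    rw [hNb ω]
    rcases Set.eq_empty_or_nonempty {L : ℕ | L ∈ Finset.Icc 1 n ∧ P L ω} with h | h
    · rw [h, csSup_empty]; exact Nat.zero_le n
    · exact (Finset.mem_Icc.1 (Nat.sSup_mem h (hbddT ω)).1).2
  have hmemE : ∀ ω, L₀ + 1 ≤ Nb ω → ω ∈ E := by
    intro ω hω
    have hne : {L : ℕ | L ∈ Finset.Icc 1 n ∧ P L ω}.Nonempty := by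
      by_contra h
      rw [Set.not_nonempty_iff_eq_empty] at h
      rw [hNb ω, h, csSup_empty] at hω
      simp at hω
    have hmem := Nat.sSup_mem hne (hbddT ω)
    rw [← hNb ω] at hmem
    obtain ⟨hIcc, s, hsmem, hsum⟩ := hmem
    refine Set.mem_biUnion (?_ : Nb ω ∈ Finset.Icc (L₀ + 1) n) ?_
    · exact Finset.mem_Icc.2 ⟨hω, (Finset.mem_Icc.1 hIcc).2⟩
    · exact Set.mem_biUnion hsmem hsum
  -- measurability of Nb
  have hNbm : Measurable Nb := by
    have heq : Nb = fun ω => (Finset.Icc 1 n).sup (fun L => if P L ω then L else 0) := by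
      funext ω
      rw [hNb ω]
      apply le_antisymm
      · rcases Set.eq_empty_or_nonempty {L : ℕ | L ∈ Finset.Icc 1 n ∧ P L ω} with h | h
        · rw [h, csSup_empty]; exact Nat.zero_le _
        · have hmem := Nat.sSup_mem h (hbddT ω)
          calc sSup {L : ℕ | L ∈ Finset.Icc 1 n ∧ P L ω}
              = if P (sSup {L : ℕ | L ∈ Finset.Icc 1 n ∧ P L ω}) ω
                then sSup {L : ℕ | L ∈ Finset.Icc 1 n ∧ P L ω} else 0 := by
                rw [if_pos hmem.2]
            _ ≤ _ := Finset.le_sup (f := fun L => if P L ω then L else 0) hmem.1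
      · refine Finset.sup_le fun L hL => ?_
        split_ifs with h
        · exact le_csSup (hbddT ω) ⟨hL, h⟩
        · exact Nat.zero_le _
    rw [heq]
    refine aux_meas_sup _ _ fun L => ?_
    exact Measurable.ite (hPmeas L) measurable_const measurable_const
  -- integrability
  have hNb_int : Integrable (fun ω => (Nb ω : ℝ)) μ := by
    refine (integrable_const ((n:ℝ))).mono'
      ((measurable_from_top.comp hNbm).aestronglyMeasurable) ?_
    refine ae_of_all _ fun ω => ?_
    rw [Real.norm_eq_abs, abs_of_nonneg (by positivity)]
    exact_mod_cast hNb_le_n ω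
  -- pointwise bound
  have hpt : ∀ ω, (Nb ω : ℝ) ≤ (L₀ : ℝ) + (n : ℝ) * E.indicator (fun _ => (1:ℝ)) ω := by
    intro ω
    by_cases hω : ω ∈ E
    · rw [Set.indicator_of_mem hω]
      have : (Nb ω : ℝ) ≤ (n : ℝ) := by exact_mod_cast hNb_le_n ω
      have hL0nn : (0:ℝ) ≤ (L₀ : ℝ) := Nat.cast_nonneg _
      linarith
    · rw [Set.indicator_of_notMem hω, mul_zero, add_zero]
      have : Nb ω ≤ L₀ := by
        by_contra h
        exact hω (hmemE ω (by omega))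
      exact_mod_cast this
  -- integrate
  have hind_int : Integrable (fun ω => (L₀ : ℝ) + (n : ℝ) * E.indicator (fun _ => (1:ℝ)) ω) μ := by
    refine (integrable_const _).add (Integrable.const_mul ?_ _)
    exact (integrable_const (1:ℝ)).indicator hEmeas
  have hint_le : ∫ ω, (Nb ω : ℝ) ∂μ ≤ (L₀ : ℝ) + (n : ℝ) * (μ E).toReal := by
    have h7 := integral_mono hNb_int hind_int hpt
    refine h7.trans_eq ?_
    rw [integral_add (integrable_const _) (Integrable.const_mul
      ((integrable_const (1:ℝ)).indicator hEmeas) _), integral_const, integral_const_mul,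
      integral_indicator_const _ hEmeas]
    simp [Measure.real]
  -- final numerics
  have hmuE : (μ E).toReal ≤ (n:ℝ)⁻¹ := by
    exact (ENNReal.toReal_mono ENNReal.ofReal_ne_top hEb).trans
      (le_of_eq (ENNReal.toReal_ofReal (by positivity)))
  have hL0le : (L₀ : ℝ) ≤ c + 1 := by
    have := Nat.ceil_lt_add_one hc0
    exact this.le
  have hnmu : (n : ℝ) * (μ E).toReal ≤ 1 := by
    calc (n : ℝ) * (μ E).toReal ≤ (n : ℝ) * (n:ℝ)⁻¹ := by
          refine mul_le_mul_of_nonneg_left hmuE hnpos.le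
      _ = 1 := mul_inv_cancel₀ hnpos.ne'
  calc ∫ ω, (Nb ω : ℝ) ∂μ ≤ (L₀ : ℝ) + (n : ℝ) * (μ E).toReal := hint_le
    _ ≤ (c + 1) + 1 := add_le_add hL0le hnmu
    _ = 12 / gstar ^ 2 * Real.log n + 2 * b / gstar + 2 := by rw [hc]; ring
    _ ≤ (16 / gstar ^ 2) * Real.log n + 2 * b / gstar + 2 := by
        have h8 : 0 ≤ 4 / gstar ^ 2 * Real.log n := by positivity
        have h9 : 16 / gstar ^ 2 * Real.log n
            = 12 / gstar ^ 2 * Real.log n + 4 / gstar ^ 2 * Real.log n := by ring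
        linarith
end

section
/- Fix ε ∈ [0,1], N ≥ 1, and values I_{s,t} ∈ {0,1}, W_t ∈ {−1,0,1} for t ∈ [N]. Define T_j = Σ_{t=1}^N (I_{s,t} − ε) + Σ_{t=1}^{j−1} W_t + (1 − ε). Suppose the set {j ∈ [N] : T_j ≤ 0} is nonempty with maximum ĵ, and ĵ < N. Then −1 < T_{ĵ} ≤ 0; consequently, writing R̂⁺ = (T_{ĵ} + (N+1)ε)/(N+1) for the bumped empirical risk at the selected threshold, one has ε − 1/(N+1) < R̂⁺ ≤ ε. -/
open Finset

/-! By maximality of `ĵ < N`, the next index has `T (ĵ + 1) > 0`; since one step changes `T` by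
`W ĵ ≤ 1`, this forces `T ĵ > -1`. Dividing `T ĵ ∈ (-1, 0]` by `N + 1` gives the risk bounds. -/

theorem Finset.sum_Icc_one_eq_sum_Icc_one_pred_add {M : Type*} [AddCommMonoid M] (W : ℕ → M)
    {j : ℕ} (hj : 1 ≤ j) : ∑ t ∈ Icc 1 j, W t = ∑ t ∈ Icc 1 (j - 1), W t + W j := by
  obtain ⟨k, rfl⟩ := Nat.exists_eq_add_of_le' hj
  simpa using Finset.sum_Icc_succ_top (by omega : 1 ≤ k + 1) W

theorem add_mul_div_mem_Ioc {n T ε : ℝ} (hn : 0 < n) (hT₁ : -1 < T) (hT₂ : T ≤ 0) :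
    (T + n * ε) / n ∈ Set.Ioc (ε - 1 / n) ε := by
  have hsplit : (T + n * ε) / n = T / n + ε := by field_simp
  rw [hsplit]
  constructor
  · linarith [div_lt_div_of_pos_right hT₁ hn, neg_div n 1]
  · linarith [div_nonpos_of_nonpos_of_nonneg hT₂ hn.le]

theorem stmt15_general (N : ℕ) (ε : ℝ)
    (Is : ℕ → ℝ)
    (W : ℕ → ℝ) (hW : ∀ t, W t = -1 ∨ W t = 0 ∨ W t = 1)
    (T : ℕ → ℝ)
    (hT : ∀ j, T j = (∑ t ∈ Finset.Icc 1 N, (Is t - ε))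
        + (∑ t ∈ Finset.Icc 1 (j - 1), W t) + (1 - ε))
    (jhat : ℕ)
    (hjhat_mem : jhat ∈ Finset.Icc 1 N) (hjhat_le : T jhat ≤ 0)
    (hjhat_max : ∀ j ∈ Finset.Icc 1 N, T j ≤ 0 → j ≤ jhat)
    (hjhatN : jhat < N)
    (Rplus : ℝ) (hRplus : Rplus = (T jhat + ((N : ℝ) + 1) * ε) / ((N : ℝ) + 1)) :
    (-1 < T jhat ∧ T jhat ≤ 0) ∧ (ε - 1 / ((N : ℝ) + 1) < Rplus ∧ Rplus ≤ ε) := by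
  have hj : 1 ≤ jhat := (mem_Icc.mp hjhat_mem).1
  have hnext_pos : 0 < T (jhat + 1) := by
    by_contra! h
    have := hjhat_max (jhat + 1) (mem_Icc.mpr ⟨by omega, hjhatN⟩) h
    omega
  have hstep : T (jhat + 1) = T jhat + W jhat := by
    rw [hT, hT, Nat.add_sub_cancel, sum_Icc_one_eq_sum_Icc_one_pred_add W hj]
    ring
  have hW_le : W jhat ≤ 1 := by rcases hW jhat with h | h | h <;> rw [h] <;> norm_num
  have hT_gt : -1 < T jhat := by linarith
  exact ⟨⟨hT_gt, hjhat_le⟩, hRplus ▸ add_mul_div_mem_Ioc (by positivity) hT_gt hjhat_le⟩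

/-- Tightness of the selected CRC threshold: if `ĵ = max{j ∈ [N] : T_j ≤ 0}` exists
and `ĵ < N`, then `−1 < T_ĵ ≤ 0`; consequently the bumped empirical risk
`R̂⁺ = (T_ĵ + (N+1)ε)/(N+1)` satisfies `ε − 1/(N+1) < R̂⁺ ≤ ε`. -/
theorem stmt15 (N : ℕ) (hN : 1 ≤ N) (ε : ℝ) (hε : ε ∈ Set.Icc (0:ℝ) 1)
    (Is : ℕ → ℝ) (hIs : ∀ t, Is t = 0 ∨ Is t = 1)
    (W : ℕ → ℝ) (hW : ∀ t, W t = -1 ∨ W t = 0 ∨ W t = 1)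
    (T : ℕ → ℝ)
    (hT : ∀ j, T j = (∑ t ∈ Finset.Icc 1 N, (Is t - ε))
        + (∑ t ∈ Finset.Icc 1 (j - 1), W t) + (1 - ε))
    (jhat : ℕ)
    (hjhat_mem : jhat ∈ Finset.Icc 1 N) (hjhat_le : T jhat ≤ 0)
    (hjhat_max : ∀ j ∈ Finset.Icc 1 N, T j ≤ 0 → j ≤ jhat)
    (hjhatN : jhat < N)
    (Rplus : ℝ) (hRplus : Rplus = (T jhat + ((N : ℝ) + 1) * ε) / ((N : ℝ) + 1)) :
    (-1 < T jhat ∧ T jhat ≤ 0) ∧ (ε - 1 / ((N : ℝ) + 1) < Rplus ∧ Rplus ≤ ε) :=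
  stmt15_general N ε Is W hW T hT jhat hjhat_mem hjhat_le hjhat_max hjhatN Rplus hRplus
end
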